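/- arXiv:2604.03772 — 3 statements merged into one kernel-verified Lean document; each statement's English description precedes it below -/
import Mathlib

section
/- Under the setup of the weighting lemma (discrete variables, positivity, unconfoundedness $Y \perp A \mid (X,S=1)$, source exchangeability $Y \perp S \mid V$, $P(S=0)>0$), let $R(Y,V)$ be real-valued, fix $r \in \mathbb{R}$, and define $q(x) = P(R(Y,V) \le r \mid X=x, A=1, S=1)$ and $m(v) = E[q(X) \mid V=v, S=1]$. Then $E[m(V) \mid S=0] = P(R(Y,V) \le r \mid S=0)$. -/
open scoped Classical
open Finset

/-- Probability of an event under a discrete (finite) probability weight `p`. -/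
noncomputable def prob {Ω : Type*} [Fintype Ω] (p : Ω → ℝ) (E : Ω → Prop) : ℝ :=
  ∑ ω, if E ω then p ω else 0

/-- Conditional probability `P(A | B)`. -/
noncomputable def cprob {Ω : Type*} [Fintype Ω] (p : Ω → ℝ) (A B : Ω → Prop) : ℝ :=
  prob p (fun ω => A ω ∧ B ω) / prob p B

/-- Expectation `E[f]`. -/
noncomputable def expect {Ω : Type*} [Fintype Ω] (p : Ω → ℝ) (f : Ω → ℝ) : ℝ :=
  ∑ ω, p ω * f ω

/-- Conditional expectation `E[f | B]`. -/
noncomputable def cexpect {Ω : Type*} [Fintype Ω] (p : Ω → ℝ) (f : Ω → ℝ) (B : Ω → Prop) : ℝ :=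
  (∑ ω, if B ω then p ω * f ω else 0) / prob p B

/-- Conditional independence `X ⟂ Z ∣ W` (on an additional conditioning event `E`),
in the discrete sense. -/
def CondIndepOn {Ω 𝓧 𝓩 𝓦 : Type*} [Fintype Ω] (p : Ω → ℝ)
    (X : Ω → 𝓧) (Z : Ω → 𝓩) (W : Ω → 𝓦) (E : Ω → Prop) : Prop :=
  ∀ x z w, 0 < prob p (fun ω => W ω = w ∧ E ω) →
    cprob p (fun ω => X ω = x ∧ Z ω = z) (fun ω => W ω = w ∧ E ω) =
      cprob p (fun ω => X ω = x) (fun ω => W ω = w ∧ E ω) *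
        cprob p (fun ω => Z ω = z) (fun ω => W ω = w ∧ E ω)

/-- Conditional independence `X ⟂ Z ∣ W` in the discrete sense. -/
def CondIndep {Ω 𝓧 𝓩 𝓦 : Type*} [Fintype Ω] (p : Ω → ℝ)
    (X : Ω → 𝓧) (Z : Ω → 𝓩) (W : Ω → 𝓦) : Prop :=
  CondIndepOn p X Z W (fun _ => True)

/-- The pinball (quantile) loss at level `α`. -/
noncomputable def pinball (α x : ℝ) : ℝ :=
  α * |x| * (if 0 ≤ x then 1 else 0) + (1 - α) * |x| * (if x < 0 then 1 else 0)

/-- The unnormalized conditional expectation sum (numerator of `cexpect`). -/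
noncomputable def wsum {Ω : Type*} [Fintype Ω] (p : Ω → ℝ) (f : Ω → ℝ) (B : Ω → Prop) : ℝ :=
  ∑ ω, if B ω then p ω * f ω else 0

section helpers
variable {Ω : Type*} [Fintype Ω] {p : Ω → ℝ}

lemma prob_nonneg (hp : ∀ ω, 0 ≤ p ω) (E : Ω → Prop) : 0 ≤ prob p E := by
  apply Finset.sum_nonneg; intro ω _
  by_cases h : E ω <;> simp [h, hp ω]

lemma prob_congr {E F : Ω → Prop} (h : ∀ ω, E ω ↔ F ω) : prob p E = prob p F := by
  unfold prob; exact Finset.sum_congr rfl fun ω _ => by simp [h ω]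

lemma prob_mono (hp : ∀ ω, 0 ≤ p ω) {E F : Ω → Prop} (h : ∀ ω, E ω → F ω) :
    prob p E ≤ prob p F := by
  apply Finset.sum_le_sum; intro ω _
  by_cases hE : E ω
  · simp [hE, h ω hE]
  · by_cases hF : F ω <;> simp [hE, hF, hp ω]

lemma le_prob (hp : ∀ ω, 0 ≤ p ω) {E : Ω → Prop} {ω : Ω} (hE : E ω) : p ω ≤ prob p E := by
  have := Finset.single_le_sum (f := fun ω => if E ω then p ω else 0)
    (fun ω _ => by by_cases h : E ω <;> simp [h, hp ω]) (Finset.mem_univ ω)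
  simpa [hE, prob] using this

lemma exists_of_prob_pos {E : Ω → Prop} (h : 0 < prob p E) : ∃ ω, E ω ∧ p ω ≠ 0 := by
  by_contra hc
  push_neg at hc
  have : prob p E = 0 := by
    apply Finset.sum_eq_zero; intro ω _
    by_cases hE : E ω <;> simp [hE, hc ω]
  simp [this] at h

lemma prob_eq_zero (hp : ∀ ω, 0 ≤ p ω) {E F : Ω → Prop} (h : ∀ ω, E ω → F ω)
    (hF : prob p F = 0) : prob p E = 0 :=
  le_antisymm (hF ▸ prob_mono hp h) (prob_nonneg hp E)

lemma prob_fiber {τ : Type*} (T : Ω → τ) (E : Ω → Prop) :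
    prob p E = ∑ t ∈ Finset.univ.image T, prob p (fun ω => T ω = t ∧ E ω) := by
  symm
  unfold prob
  rw [Finset.sum_comm]
  refine Finset.sum_congr rfl fun ω _ => ?_
  by_cases hE : E ω
  · rw [if_pos hE, Finset.sum_eq_single_of_mem (T ω)
      (Finset.mem_image_of_mem T (Finset.mem_univ ω))]
    · simp [hE]
    · intro t _ ht
      rw [if_neg]; rintro ⟨h1, _⟩; exact ht h1.symm
  · simp [hE]

lemma wsum_fiber {τ : Type*} (T : Ω → τ) (B : Ω → Prop) (g : τ → ℝ) :
    wsum p (fun ω => g (T ω)) B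
      = ∑ t ∈ Finset.univ.image T, g t * prob p (fun ω => T ω = t ∧ B ω) := by
  symm
  unfold wsum prob
  simp_rw [Finset.mul_sum]
  rw [Finset.sum_comm]
  refine Finset.sum_congr rfl fun ω _ => ?_
  by_cases hB : B ω
  · rw [if_pos hB, Finset.sum_eq_single_of_mem (T ω)
      (Finset.mem_image_of_mem T (Finset.mem_univ ω))]
    · simp [hB, mul_comm]
    · intro t _ ht
      rw [if_neg, mul_zero]; rintro ⟨h1, _⟩; exact ht h1.symm
  · simp [hB]

lemma wsum_congr {B : Ω → Prop} {g g' : Ω → ℝ} (h : ∀ ω, p ω ≠ 0 → B ω → g ω = g' ω) :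
    wsum p g B = wsum p g' B := by
  refine Finset.sum_congr rfl fun ω _ => ?_
  by_cases hB : B ω
  · by_cases hpω : p ω = 0
    · simp [hB, hpω]
    · simp [hB, h ω hpω hB]
  · simp [hB]

lemma prob_and_eq {A B : Ω → Prop} (hB : prob p B ≠ 0) :
    prob p (fun ω => A ω ∧ B ω) = cprob p A B * prob p B := by
  unfold cprob; rw [div_mul_cancel₀ _ hB]

lemma prob_and_prop {E F : Ω → Prop} {c : Prop} (h : ∀ ω, E ω → (F ω ↔ c)) :
    prob p (fun ω => E ω ∧ F ω) = if c then prob p E else 0 := by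
  by_cases hc : c
  · rw [if_pos hc]
    exact prob_congr fun ω => ⟨fun ⟨a, _⟩ => a, fun a => ⟨a, (h ω a).2 hc⟩⟩
  · rw [if_neg hc]
    apply Finset.sum_eq_zero; intro ω _
    rw [if_neg]; rintro ⟨a, b⟩; exact hc ((h ω a).1 b)

lemma indep_mul {A B C : Ω → Prop} (hC : 0 < prob p C)
    (h : cprob p (fun ω => A ω ∧ B ω) C = cprob p A C * cprob p B C) :
    prob p (fun ω => (A ω ∧ B ω) ∧ C ω) = cprob p B C * prob p (fun ω => A ω ∧ C ω) := by
  have hne : prob p C ≠ 0 := ne_of_gt hC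
  unfold cprob at h ⊢
  field_simp [hne] at h
  have h2 := h
  rw [div_mul_eq_mul_div, eq_div_iff hne]
  linear_combination h2

/-- Events that are measurable functions of `Y` factor through per-atom identities. -/
lemma prob_yevent {𝓨 : Type*} (Y : Ω → 𝓨) (T : 𝓨 → Prop) {C D : Ω → Prop} (β : ℝ)
    (h : ∀ y, prob p (fun ω => Y ω = y ∧ C ω) = β * prob p (fun ω => Y ω = y ∧ D ω)) :
    prob p (fun ω => T (Y ω) ∧ C ω) = β * prob p (fun ω => T (Y ω) ∧ D ω) := by
  rw [prob_fiber Y (fun ω => T (Y ω) ∧ C ω), prob_fiber Y (fun ω => T (Y ω) ∧ D ω),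
    Finset.mul_sum]
  refine Finset.sum_congr rfl fun y _ => ?_
  calc prob p (fun ω => Y ω = y ∧ (T (Y ω) ∧ C ω))
      = prob p (fun ω => (Y ω = y ∧ C ω) ∧ T (Y ω)) := prob_congr fun ω => by tauto
    _ = if T y then prob p (fun ω => Y ω = y ∧ C ω) else 0 :=
        prob_and_prop fun ω hω => by rw [hω.1]
    _ = if T y then β * prob p (fun ω => Y ω = y ∧ D ω) else 0 := by rw [h y]
    _ = β * (if T y then prob p (fun ω => Y ω = y ∧ D ω) else 0) := by
        by_cases hc : T y <;> simp [hc]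
    _ = β * prob p (fun ω => (Y ω = y ∧ D ω) ∧ T (Y ω)) := by
        congr 1
        exact (prob_and_prop fun ω hω => by rw [hω.1]).symm
    _ = β * prob p (fun ω => Y ω = y ∧ (T (Y ω) ∧ D ω)) := by
        congr 1
        exact prob_congr fun ω => by tauto

/-- Tower/g-computation: integrating a fiberwise conditional value gives the joint mass. -/
lemma tower {τ : Type*} (hp : ∀ ω, 0 ≤ p ω) (T : Ω → τ) (B F : Ω → Prop) (G : τ → ℝ)
    (h : ∀ ω, p ω ≠ 0 → B ω →
      G (T ω) * prob p (fun ω' => T ω' = T ω ∧ B ω')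
        = prob p (fun ω' => T ω' = T ω ∧ (F ω' ∧ B ω'))) :
    wsum p (fun ω => G (T ω)) B = prob p (fun ω => F ω ∧ B ω) := by
  rw [wsum_fiber T B G, prob_fiber T (fun ω => F ω ∧ B ω)]
  refine Finset.sum_congr rfl fun t _ => ?_
  by_cases h0 : prob p (fun ω => T ω = t ∧ B ω) = 0
  · rw [h0, mul_zero]
    exact (prob_eq_zero hp (fun ω hω => ⟨hω.1, hω.2.2⟩) h0).symm
  · have hpos : 0 < prob p (fun ω => T ω = t ∧ B ω) :=
      (prob_nonneg hp _).lt_of_ne (Ne.symm h0)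
    obtain ⟨ω, ⟨hT, hB⟩, hpω⟩ := exists_of_prob_pos hpos
    rw [← hT]
    exact h ω hpω hB

end helpers

/-- regression-based (g-computation) identification. -/
theorem stmt3 {Ω 𝓨 𝓥 𝓤 : Type*} [Fintype Ω]
    (p : Ω → ℝ) (hp : ∀ ω, 0 ≤ p ω) (hsum : ∑ ω, p ω = 1)
    (Y : Ω → 𝓨) (A S : Ω → Bool) (V : Ω → 𝓥) (U : Ω → 𝓤)
    (hgpos : ∀ x, 0 < prob p (fun ω => (V ω, U ω) = x ∧ S ω = true) →
      0 < cprob p (fun ω => A ω = true) (fun ω => (V ω, U ω) = x ∧ S ω = true))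
    (hκpos : ∀ v, 0 < prob p (fun ω => V ω = v) →
      0 < cprob p (fun ω => S ω = true) (fun ω => V ω = v) ∧
        cprob p (fun ω => S ω = true) (fun ω => V ω = v) < 1)
    (hS0 : 0 < prob p (fun ω => S ω = false))
    (hunconf : CondIndepOn p Y A (fun ω => (V ω, U ω)) (fun ω => S ω = true))
    (hexch : CondIndep p Y S V)
    (R : 𝓨 → 𝓥 → ℝ) (r : ℝ) (q : 𝓥 × 𝓤 → ℝ) (m : 𝓥 → ℝ)
    (hq : ∀ x, q x = cprob p (fun ω => R (Y ω) (V ω) ≤ r)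
      (fun ω => (V ω, U ω) = x ∧ A ω = true ∧ S ω = true))
    (hm : ∀ v, m v = cexpect p (fun ω => q (V ω, U ω)) (fun ω => V ω = v ∧ S ω = true)) :
    cexpect p (fun ω => m (V ω)) (fun ω => S ω = false)
      = cprob p (fun ω => R (Y ω) (V ω) ≤ r) (fun ω => S ω = false) := by
  have hVfst : ∀ (x : 𝓥 × 𝓤) ω, (V ω, U ω) = x → V ω = x.1 := fun x ω h => by rw [← h]
  -- Step 1: identification of q via unconfoundedness
  have hqid : ∀ x : 𝓥 × 𝓤, 0 < prob p (fun ω => (V ω, U ω) = x ∧ S ω = true) →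
      q x = cprob p (fun ω => R (Y ω) (V ω) ≤ r) (fun ω => (V ω, U ω) = x ∧ S ω = true) := by
    intro x hB
    have hPBne : prob p (fun ω => (V ω, U ω) = x ∧ S ω = true) ≠ 0 := ne_of_gt hB
    have hα : 0 < cprob p (fun ω => A ω = true) (fun ω => (V ω, U ω) = x ∧ S ω = true) :=
      hgpos x hB
    have hy' : ∀ y : 𝓨, prob p (fun ω => Y ω = y ∧ ((V ω, U ω) = x ∧ A ω = true ∧ S ω = true))
        = cprob p (fun ω => A ω = true) (fun ω => (V ω, U ω) = x ∧ S ω = true)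
          * prob p (fun ω => Y ω = y ∧ ((V ω, U ω) = x ∧ S ω = true)) := by
      intro y
      calc prob p (fun ω => Y ω = y ∧ ((V ω, U ω) = x ∧ A ω = true ∧ S ω = true))
          = prob p (fun ω => (Y ω = y ∧ A ω = true) ∧ ((V ω, U ω) = x ∧ S ω = true)) :=
            prob_congr fun ω => by tauto
        _ = _ := indep_mul hB (hunconf y true x hB)
    have hnum : prob p (fun ω => R (Y ω) (V ω) ≤ r ∧ ((V ω, U ω) = x ∧ A ω = true ∧ S ω = true))
        = cprob p (fun ω => A ω = true) (fun ω => (V ω, U ω) = x ∧ S ω = true)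
          * prob p (fun ω => R (Y ω) (V ω) ≤ r ∧ ((V ω, U ω) = x ∧ S ω = true)) := by
      calc prob p (fun ω => R (Y ω) (V ω) ≤ r ∧ ((V ω, U ω) = x ∧ A ω = true ∧ S ω = true))
          = prob p (fun ω => R (Y ω) x.1 ≤ r ∧ ((V ω, U ω) = x ∧ A ω = true ∧ S ω = true)) :=
            prob_congr fun ω => by
              constructor
              · rintro ⟨h1, h2⟩; exact ⟨by rwa [hVfst x ω h2.1] at h1, h2⟩
              · rintro ⟨h1, h2⟩; exact ⟨by rwa [hVfst x ω h2.1], h2⟩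
        _ = cprob p (fun ω => A ω = true) (fun ω => (V ω, U ω) = x ∧ S ω = true)
            * prob p (fun ω => R (Y ω) x.1 ≤ r ∧ ((V ω, U ω) = x ∧ S ω = true)) :=
            prob_yevent Y (fun y => R y x.1 ≤ r) _ hy'
        _ = _ := by
            congr 1
            exact prob_congr fun ω => by
              constructor
              · rintro ⟨h1, h2⟩; exact ⟨by rwa [hVfst x ω h2.1], h2⟩
              · rintro ⟨h1, h2⟩; exact ⟨by rwa [hVfst x ω h2.1] at h1, h2⟩
    have hden : prob p (fun ω => (V ω, U ω) = x ∧ A ω = true ∧ S ω = true)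
        = cprob p (fun ω => A ω = true) (fun ω => (V ω, U ω) = x ∧ S ω = true)
          * prob p (fun ω => (V ω, U ω) = x ∧ S ω = true) := by
      calc prob p (fun ω => (V ω, U ω) = x ∧ A ω = true ∧ S ω = true)
          = prob p (fun ω => A ω = true ∧ ((V ω, U ω) = x ∧ S ω = true)) :=
            prob_congr fun ω => by tauto
        _ = _ := prob_and_eq hPBne
    have hdiv : cprob p (fun ω => R (Y ω) (V ω) ≤ r)
        (fun ω => (V ω, U ω) = x ∧ A ω = true ∧ S ω = true)
        = prob p (fun ω => R (Y ω) (V ω) ≤ r ∧ ((V ω, U ω) = x ∧ A ω = true ∧ S ω = true))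
          / prob p (fun ω => (V ω, U ω) = x ∧ A ω = true ∧ S ω = true) := rfl
    rw [hq x, hdiv, hnum, hden, mul_div_mul_left _ _ (ne_of_gt hα)]
    rfl
  -- Step 2: identification of m via tower + exchangeability
  have hkey : ∀ v, 0 < prob p (fun ω => V ω = v ∧ S ω = false) →
      m v = cprob p (fun ω => R (Y ω) (V ω) ≤ r) (fun ω => V ω = v ∧ S ω = false) := by
    intro v hv0
    have hPv : 0 < prob p (fun ω => V ω = v) :=
      lt_of_lt_of_le hv0 (prob_mono hp fun ω h => h.1)
    have hPvT : 0 < prob p (fun ω => V ω = v ∧ True) := by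
      rwa [prob_congr (F := fun ω => V ω = v) (fun ω => by tauto)]
    obtain ⟨hκ1, _⟩ := hκpos v hPv
    have hP1 : 0 < prob p (fun ω => V ω = v ∧ S ω = true) := by
      have h2 : prob p (fun ω => V ω = v ∧ S ω = true)
          = cprob p (fun ω => S ω = true) (fun ω => V ω = v) * prob p (fun ω => V ω = v) :=
        (prob_congr fun ω => by tauto).trans (prob_and_eq (ne_of_gt hPv))
      rw [h2]; exact mul_pos hκ1 hPv
    -- numerator of m via tower
    have hnum2 : wsum p (fun ω => q (V ω, U ω)) (fun ω => V ω = v ∧ S ω = true)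
        = prob p (fun ω => R (Y ω) (V ω) ≤ r ∧ (V ω = v ∧ S ω = true)) := by
      calc wsum p (fun ω => q (V ω, U ω)) (fun ω => V ω = v ∧ S ω = true)
          = wsum p (fun ω => (fun x => cprob p (fun ω' => R (Y ω') (V ω') ≤ r)
              (fun ω' => (V ω', U ω') = x ∧ S ω' = true)) ((V ω, U ω)))
              (fun ω => V ω = v ∧ S ω = true) := by
            refine wsum_congr fun ω hpω hBω => ?_
            have hωpos : 0 < prob p (fun ω' => (V ω', U ω') = (V ω, U ω) ∧ S ω' = true) :=
              lt_of_lt_of_le ((hp ω).lt_of_ne (Ne.symm hpω)) (le_prob hp ⟨rfl, hBω.2⟩)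
            exact hqid (V ω, U ω) hωpos
        _ = prob p (fun ω => R (Y ω) (V ω) ≤ r ∧ (V ω = v ∧ S ω = true)) := by
            refine tower hp (fun ω => (V ω, U ω)) (fun ω => V ω = v ∧ S ω = true)
              (fun ω => R (Y ω) (V ω) ≤ r)
              (fun x => cprob p (fun ω' => R (Y ω') (V ω') ≤ r)
                (fun ω' => (V ω', U ω') = x ∧ S ω' = true)) ?_
            intro ω hpω hBω
            have hωpos : 0 < prob p (fun ω' => (V ω', U ω') = (V ω, U ω) ∧ S ω' = true) :=
              lt_of_lt_of_le ((hp ω).lt_of_ne (Ne.symm hpω)) (le_prob hp ⟨rfl, hBω.2⟩)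
            have hcg : prob p (fun ω' => (V ω', U ω') = (V ω, U ω) ∧ (V ω' = v ∧ S ω' = true))
                = prob p (fun ω' => (V ω', U ω') = (V ω, U ω) ∧ S ω' = true) := by
              refine prob_congr fun ω' => ⟨fun h => ⟨h.1, h.2.2⟩, fun h => ⟨h.1, ?_, h.2⟩⟩
              rw [hVfst _ ω' h.1]; exact hBω.1
            show cprob p (fun ω' => R (Y ω') (V ω') ≤ r)
                (fun ω' => (V ω', U ω') = (V ω, U ω) ∧ S ω' = true)
                * prob p (fun ω' => (V ω', U ω') = (V ω, U ω) ∧ (V ω' = v ∧ S ω' = true)) = _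
            rw [hcg]
            unfold cprob
            rw [div_mul_cancel₀ _ (ne_of_gt hωpos)]
            refine prob_congr fun ω' => ⟨fun h => ⟨h.2.1, h.1, ?_, h.2.2⟩,
              fun h => ⟨h.2.1, h.1, h.2.2.2⟩⟩
            rw [hVfst _ ω' h.2.1]; exact hBω.1
    have hmv : m v = prob p (fun ω => R (Y ω) (V ω) ≤ r ∧ (V ω = v ∧ S ω = true))
        / prob p (fun ω => V ω = v ∧ S ω = true) := by
      rw [hm v]
      show wsum p (fun ω => q (V ω, U ω)) (fun ω => V ω = v ∧ S ω = true)
        / prob p (fun ω => V ω = v ∧ S ω = true) = _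
      rw [hnum2]
    -- exchangeability
    have hys : ∀ (s : Bool) (y : 𝓨), prob p (fun ω => Y ω = y ∧ (V ω = v ∧ S ω = s))
        = cprob p (fun ω => S ω = s) (fun ω => V ω = v ∧ True)
          * prob p (fun ω => Y ω = y ∧ V ω = v) := by
      intro s y
      calc prob p (fun ω => Y ω = y ∧ (V ω = v ∧ S ω = s))
          = prob p (fun ω => (Y ω = y ∧ S ω = s) ∧ (V ω = v ∧ True)) :=
            prob_congr fun ω => by tauto
        _ = cprob p (fun ω => S ω = s) (fun ω => V ω = v ∧ True)
            * prob p (fun ω => Y ω = y ∧ (V ω = v ∧ True)) :=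
            indep_mul hPvT (hexch y s v hPvT)
        _ = _ := by
            congr 1
            exact prob_congr fun ω => by tauto
    have hnums : ∀ s : Bool, prob p (fun ω => R (Y ω) (V ω) ≤ r ∧ (V ω = v ∧ S ω = s))
        = cprob p (fun ω => S ω = s) (fun ω => V ω = v ∧ True)
          * prob p (fun ω => R (Y ω) v ≤ r ∧ V ω = v) := by
      intro s
      calc prob p (fun ω => R (Y ω) (V ω) ≤ r ∧ (V ω = v ∧ S ω = s))
          = prob p (fun ω => R (Y ω) v ≤ r ∧ (V ω = v ∧ S ω = s)) :=
            prob_congr fun ω => by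
              constructor
              · rintro ⟨h1, h2⟩; exact ⟨by rwa [h2.1] at h1, h2⟩
              · rintro ⟨h1, h2⟩; exact ⟨by rwa [h2.1], h2⟩
        _ = _ := prob_yevent Y (fun y => R y v ≤ r) _ (hys s)
    have hdens : ∀ s : Bool, prob p (fun ω => V ω = v ∧ S ω = s)
        = cprob p (fun ω => S ω = s) (fun ω => V ω = v ∧ True)
          * prob p (fun ω => V ω = v) := by
      intro s
      calc prob p (fun ω => V ω = v ∧ S ω = s)
          = prob p (fun ω => S ω = s ∧ (V ω = v ∧ True)) := prob_congr fun ω => by tauto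
        _ = cprob p (fun ω => S ω = s) (fun ω => V ω = v ∧ True)
            * prob p (fun ω => V ω = v ∧ True) := prob_and_eq (ne_of_gt hPvT)
        _ = _ := by
            congr 1
            exact prob_congr fun ω => by tauto
    have hβ : ∀ s : Bool, 0 < prob p (fun ω => V ω = v ∧ S ω = s) →
        cprob p (fun ω => S ω = s) (fun ω => V ω = v ∧ True) ≠ 0 := by
      intro s hpos h0
      rw [hdens s, h0, zero_mul] at hpos
      exact lt_irrefl 0 hpos
    calc m v = prob p (fun ω => R (Y ω) (V ω) ≤ r ∧ (V ω = v ∧ S ω = true))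
          / prob p (fun ω => V ω = v ∧ S ω = true) := hmv
      _ = prob p (fun ω => R (Y ω) v ≤ r ∧ V ω = v) / prob p (fun ω => V ω = v) := by
          rw [hnums true, hdens true, mul_div_mul_left _ _ (hβ true hP1)]
      _ = prob p (fun ω => R (Y ω) (V ω) ≤ r ∧ (V ω = v ∧ S ω = false))
          / prob p (fun ω => V ω = v ∧ S ω = false) := by
          rw [hnums false, hdens false, mul_div_mul_left _ _ (hβ false hv0)]
      _ = cprob p (fun ω => R (Y ω) (V ω) ≤ r) (fun ω => V ω = v ∧ S ω = false) := rfl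
  -- Step 3: final tower over V conditional on S = 0
  have hnum0 : wsum p (fun ω => m (V ω)) (fun ω => S ω = false)
      = prob p (fun ω => R (Y ω) (V ω) ≤ r ∧ S ω = false) := by
    calc wsum p (fun ω => m (V ω)) (fun ω => S ω = false)
        = wsum p (fun ω => (fun v => cprob p (fun ω' => R (Y ω') (V ω') ≤ r)
            (fun ω' => V ω' = v ∧ S ω' = false)) (V ω)) (fun ω => S ω = false) := by
          refine wsum_congr fun ω hpω hBω => ?_
          have hωpos : 0 < prob p (fun ω' => V ω' = V ω ∧ S ω' = false) :=
            lt_of_lt_of_le ((hp ω).lt_of_ne (Ne.symm hpω)) (le_prob hp ⟨rfl, hBω⟩)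
          exact hkey (V ω) hωpos
      _ = prob p (fun ω => R (Y ω) (V ω) ≤ r ∧ S ω = false) := by
          refine tower hp V (fun ω => S ω = false) (fun ω => R (Y ω) (V ω) ≤ r)
            (fun v => cprob p (fun ω' => R (Y ω') (V ω') ≤ r)
              (fun ω' => V ω' = v ∧ S ω' = false)) ?_
          intro ω hpω hBω
          have hωpos : 0 < prob p (fun ω' => V ω' = V ω ∧ S ω' = false) :=
            lt_of_lt_of_le ((hp ω).lt_of_ne (Ne.symm hpω)) (le_prob hp ⟨rfl, hBω⟩)
          show cprob p (fun ω' => R (Y ω') (V ω') ≤ r) (fun ω' => V ω' = V ω ∧ S ω' = false)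
            * prob p (fun ω' => V ω' = V ω ∧ S ω' = false) = _
          unfold cprob
          rw [div_mul_cancel₀ _ (ne_of_gt hωpos)]
          exact prob_congr fun ω' => by tauto
  show wsum p (fun ω => m (V ω)) (fun ω => S ω = false) / prob p (fun ω => S ω = false)
    = prob p (fun ω => R (Y ω) (V ω) ≤ r ∧ S ω = false) / prob p (fun ω => S ω = false)
  rw [hnum0]
end

section
/- With notation as in the efficient influence curve, let $\hat q, \hat m, \hat g, \hat\kappa$ be arbitrary (estimated) versions of the nuisance functions with $\hat g(x), \hat\kappa(v) \in (\varepsilon, 1-\varepsilon)$ for some $\varepsilon>0$, and let $\chi(O;\hat\eta)$ denote the influence-curve expression with estimated nuisances plugged in. Then $E[\chi(O;\hat\eta)] - E[\chi(O;\eta)] = E\left[\frac{P(S=1\mid X)(1-\hat\kappa(V))}{\hat\kappa(V)\,\hat g(X)}(\hat q(X)-q(X))(\hat g(X)-g(X))\right] + E\left[\frac{\hat\kappa(V)-\kappa(V)}{\hat\kappa(V)}(\hat m(V)-m(V))\right]$. -/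
open scoped Classical
open Finset

/-- Real-valued indicator of a proposition. -/
noncomputable def ind (P : Prop) : ℝ := if P then 1 else 0

/-- The influence-curve expression with (possibly estimated) nuisances plugged in. -/
noncomputable def chiFn {Ω 𝓨 𝓥 𝓤 : Type*}
    (Y : Ω → 𝓨) (A S : Ω → Bool) (V : Ω → 𝓥) (U : Ω → 𝓤)
    (R : 𝓨 → 𝓥 → ℝ) (r α : ℝ)
    (q : 𝓥 × 𝓤 → ℝ) (m : 𝓥 → ℝ) (g : 𝓥 × 𝓤 → ℝ) (κ : 𝓥 → ℝ) (ω : Ω) : ℝ :=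
  ind (S ω = false) * (m (V ω) - (1 - α))
  + ind (S ω = true) * (1 - κ (V ω)) / κ (V ω) * (q (V ω, U ω) - m (V ω))
  + ind (A ω = true) * ind (S ω = true) * (1 - κ (V ω)) / (g (V ω, U ω) * κ (V ω)) *
      (ind (R (Y ω) (V ω) ≤ r) - q (V ω, U ω))

lemma ind_nonneg (P : Prop) : 0 ≤ ind P := by
  unfold ind; split_ifs <;> norm_num

lemma ind_of_true {P : Prop} (h : P) : ind P = 1 := by simp [ind, h]

lemma ind_of_false {P : Prop} (h : ¬P) : ind P = 0 := by simp [ind, h]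

lemma sum_fiber' {Ω 𝓦 : Type*} [Fintype Ω] (W : Ω → 𝓦) (F : Ω → ℝ) :
    ∑ ω, F ω = ∑ w ∈ Finset.univ.image W, ∑ ω, if W ω = w then F ω else 0 := by
  classical
  rw [Finset.sum_comm]
  refine Finset.sum_congr rfl fun ω _ => ?_
  rw [Finset.sum_ite_eq (Finset.univ.image W) (W ω) (fun _ => F ω)]
  exact (if_pos (Finset.mem_image_of_mem W (Finset.mem_univ ω))).symm

lemma master {Ω 𝓦 : Type*} [Fintype Ω] (p : Ω → ℝ) (hp : ∀ ω, 0 ≤ p ω)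
    (W : Ω → 𝓦) (B : Ω → Prop) (h : Ω → ℝ) (c : 𝓦 → ℝ) (f : 𝓦 → ℝ)
    (hc : ∀ w, c w = (∑ ω, ind (W ω = w) * (ind (B ω) * (p ω * h ω)))
        / (∑ ω, ind (W ω = w) * (ind (B ω) * p ω))) :
    (∑ ω, ind (B ω) * (p ω * (h ω * f (W ω))))
      = ∑ ω, ind (B ω) * (p ω * (c (W ω) * f (W ω))) := by
  classical
  rw [sum_fiber' W (fun ω => ind (B ω) * (p ω * (h ω * f (W ω)))),
      sum_fiber' W (fun ω => ind (B ω) * (p ω * (c (W ω) * f (W ω))))]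
  refine Finset.sum_congr rfl fun w _ => ?_
  have hL : (∑ ω, if W ω = w then ind (B ω) * (p ω * (h ω * f (W ω))) else 0)
      = f w * ∑ ω, ind (W ω = w) * (ind (B ω) * (p ω * h ω)) := by
    rw [Finset.mul_sum]
    refine Finset.sum_congr rfl fun ω _ => ?_
    by_cases h1 : W ω = w <;> simp [ind, h1] <;> ring
  have hR : (∑ ω, if W ω = w then ind (B ω) * (p ω * (c (W ω) * f (W ω))) else 0)
      = c w * f w * ∑ ω, ind (W ω = w) * (ind (B ω) * p ω) := by
    rw [Finset.mul_sum]
    refine Finset.sum_congr rfl fun ω _ => ?_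
    by_cases h1 : W ω = w <;> simp [ind, h1] <;> ring
  rw [hL, hR]
  by_cases hd : (∑ ω, ind (W ω = w) * (ind (B ω) * p ω)) = 0
  · have hz : ∀ ω, (W ω = w ∧ B ω) → p ω = 0 := by
      intro ω hω
      have h0 := (Finset.sum_eq_zero_iff_of_nonneg (fun ω _ =>
        mul_nonneg (ind_nonneg _) (mul_nonneg (ind_nonneg _) (hp ω)))).mp hd ω
        (Finset.mem_univ ω)
      simpa [ind, hω.1, hω.2] using h0
    have hnum : (∑ ω, ind (W ω = w) * (ind (B ω) * (p ω * h ω))) = 0 :=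
      Finset.sum_eq_zero fun ω _ => by
        by_cases h1 : W ω = w
        · by_cases h2 : B ω
          · simp [ind, h1, h2, hz ω ⟨h1, h2⟩]
          · simp [ind, h1, h2]
        · simp [ind, h1]
    rw [hnum, hd]; ring
  · rw [hc w]
    rw [div_mul_eq_mul_div, div_mul_eq_mul_div, eq_div_iff hd]
    ring

/-- exact second-order product-bias decomposition. -/
theorem stmt5 {Ω 𝓨 𝓥 𝓤 : Type*} [Fintype Ω]
    (p : Ω → ℝ) (hp : ∀ ω, 0 ≤ p ω) (hsum : ∑ ω, p ω = 1)
    (Y : Ω → 𝓨) (A S : Ω → Bool) (V : Ω → 𝓥) (U : Ω → 𝓤)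
    (R : 𝓨 → 𝓥 → ℝ) (r α : ℝ)
    (g : 𝓥 × 𝓤 → ℝ) (κ : 𝓥 → ℝ) (q : 𝓥 × 𝓤 → ℝ) (m : 𝓥 → ℝ)
    (hg : ∀ x, g x = cprob p (fun ω => A ω = true) (fun ω => (V ω, U ω) = x ∧ S ω = true))
    (hκ : ∀ v, κ v = cprob p (fun ω => S ω = true) (fun ω => V ω = v))
    (hq : ∀ x, q x = cprob p (fun ω => R (Y ω) (V ω) ≤ r)
      (fun ω => (V ω, U ω) = x ∧ A ω = true ∧ S ω = true))
    (hm : ∀ v, m v = cexpect p (fun ω => q (V ω, U ω)) (fun ω => V ω = v ∧ S ω = true))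
    (hgpos : ∀ x, 0 < prob p (fun ω => (V ω, U ω) = x ∧ S ω = true) → 0 < g x ∧ g x < 1)
    (hκpos : ∀ v, 0 < prob p (fun ω => V ω = v) → 0 < κ v ∧ κ v < 1)
    (hπpos : ∀ x, 0 < prob p (fun ω => (V ω, U ω) = x) →
      0 < cprob p (fun ω => S ω = true) (fun ω => (V ω, U ω) = x))
    (hS0 : 0 < prob p (fun ω => S ω = false))
    (hunconf : CondIndepOn p Y A (fun ω => (V ω, U ω)) (fun ω => S ω = true))
    (hexch : CondIndep p Y S V)
    (qh : 𝓥 × 𝓤 → ℝ) (mh : 𝓥 → ℝ) (gh : 𝓥 × 𝓤 → ℝ) (κh : 𝓥 → ℝ)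
    (ε : ℝ) (hε : 0 < ε)
    (hgh : ∀ x, gh x ∈ Set.Ioo ε (1 - ε)) (hκh : ∀ v, κh v ∈ Set.Ioo ε (1 - ε)) :
    expect p (chiFn Y A S V U R r α qh mh gh κh)
      - expect p (chiFn Y A S V U R r α q m g κ)
      = expect p (fun ω =>
          cprob p (fun ω' => S ω' = true) (fun ω' => (V ω', U ω') = (V ω, U ω))
            * (1 - κh (V ω)) / (κh (V ω) * gh (V ω, U ω))
            * (qh (V ω, U ω) - q (V ω, U ω)) * (gh (V ω, U ω) - g (V ω, U ω)))
        + expect p (fun ω =>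
            (κh (V ω) - κ (V ω)) / κh (V ω) * (mh (V ω) - m (V ω))) := by
  classical
  have hκh0 : ∀ v, κh v ≠ 0 := fun v => ne_of_gt (hε.trans (hκh v).1)
  have hgh0 : ∀ x, gh x ≠ 0 := fun x => ne_of_gt (hε.trans (hgh x).1)
  have indT : ind True = 1 := by simp [ind]
  -- tower-property instances
  have instq : ∀ f : 𝓥 × 𝓤 → ℝ,
      (∑ ω, ind (A ω = true ∧ S ω = true) *
          (p ω * (ind (R (Y ω) (V ω) ≤ r) * f (V ω, U ω))))
      = ∑ ω, ind (A ω = true ∧ S ω = true) *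
          (p ω * (q (V ω, U ω) * f (V ω, U ω))) := by
    intro f
    refine master p hp (fun ω => (V ω, U ω)) (fun ω => A ω = true ∧ S ω = true)
      (fun ω => ind (R (Y ω) (V ω) ≤ r)) q f (fun x => ?_)
    rw [hq x]
    unfold cprob prob
    congr 1
    · refine Finset.sum_congr rfl fun ω _ => ?_
      by_cases h1 : R (Y ω) (V ω) ≤ r <;>
        by_cases h2 : (V ω, U ω) = x <;>
        by_cases h3 : A ω = true ∧ S ω = true <;> simp [ind, h1, h2, h3]
    · refine Finset.sum_congr rfl fun ω _ => ?_
      by_cases h2 : (V ω, U ω) = x <;>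
        by_cases h3 : A ω = true ∧ S ω = true <;> simp [ind, h2, h3]
  have instg : ∀ f : 𝓥 × 𝓤 → ℝ,
      (∑ ω, ind (S ω = true) * (p ω * (ind (A ω = true) * f (V ω, U ω))))
      = ∑ ω, ind (S ω = true) * (p ω * (g (V ω, U ω) * f (V ω, U ω))) := by
    intro f
    refine master p hp (fun ω => (V ω, U ω)) (fun ω => S ω = true)
      (fun ω => ind (A ω = true)) g f (fun x => ?_)
    rw [hg x]
    unfold cprob prob
    congr 1
    · refine Finset.sum_congr rfl fun ω _ => ?_
      by_cases h1 : A ω = true <;> by_cases h2 : (V ω, U ω) = x <;>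
        by_cases h3 : S ω = true <;> simp [ind, h1, h2, h3]
    · refine Finset.sum_congr rfl fun ω _ => ?_
      by_cases h2 : (V ω, U ω) = x <;> by_cases h3 : S ω = true <;> simp [ind, h2, h3]
  have instm : ∀ f : 𝓥 → ℝ,
      (∑ ω, ind (S ω = true) * (p ω * (q (V ω, U ω) * f (V ω))))
      = ∑ ω, ind (S ω = true) * (p ω * (m (V ω) * f (V ω))) := by
    intro f
    refine master p hp V (fun ω => S ω = true) (fun ω => q (V ω, U ω)) m f (fun v => ?_)
    rw [hm v]
    unfold cexpect prob
    congr 1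
    · refine Finset.sum_congr rfl fun ω _ => ?_
      by_cases h2 : V ω = v <;> by_cases h3 : S ω = true <;> simp [ind, h2, h3]
    · refine Finset.sum_congr rfl fun ω _ => ?_
      by_cases h2 : V ω = v <;> by_cases h3 : S ω = true <;> simp [ind, h2, h3]
  have instκ : ∀ f : 𝓥 → ℝ,
      (∑ ω, p ω * (ind (S ω = true) * f (V ω)))
      = ∑ ω, p ω * (κ (V ω) * f (V ω)) := by
    intro f
    have hc : ∀ v, κ v = (∑ ω, ind (V ω = v) * (ind True * (p ω * ind (S ω = true))))
        / (∑ ω, ind (V ω = v) * (ind True * p ω)) := by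
      intro v
      rw [hκ v]
      unfold cprob prob
      congr 1
      · refine Finset.sum_congr rfl fun ω _ => ?_
        by_cases h1 : S ω = true <;> by_cases h2 : V ω = v <;> simp [ind, h1, h2]
      · refine Finset.sum_congr rfl fun ω _ => ?_
        by_cases h2 : V ω = v <;> simp [ind, h2]
    have H := master p hp V (fun _ => True) (fun ω => ind (S ω = true)) κ f hc
    simpa only [indT, one_mul] using H
  have instπ : ∀ f : 𝓥 × 𝓤 → ℝ,
      (∑ ω, p ω * (ind (S ω = true) * f (V ω, U ω)))
      = ∑ ω, p ω * (cprob p (fun ω' => S ω' = true)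
          (fun ω' => (V ω', U ω') = (V ω, U ω)) * f (V ω, U ω)) := by
    intro f
    have hc : ∀ x : 𝓥 × 𝓤, (fun y => cprob p (fun ω' => S ω' = true)
          (fun ω' => (V ω', U ω') = y)) x
        = (∑ ω, ind ((V ω, U ω) = x) * (ind True * (p ω * ind (S ω = true))))
          / (∑ ω, ind ((V ω, U ω) = x) * (ind True * p ω)) := by
      intro x
      show cprob p _ _ = _
      unfold cprob prob
      congr 1
      · refine Finset.sum_congr rfl fun ω _ => ?_
        by_cases h1 : S ω = true <;> by_cases h2 : (V ω, U ω) = x <;> simp [ind, h1, h2]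
      · refine Finset.sum_congr rfl fun ω _ => ?_
        by_cases h2 : (V ω, U ω) = x <;> simp [ind, h2]
    have H := master p hp (fun ω => (V ω, U ω)) (fun _ => True)
      (fun ω => ind (S ω = true))
      (fun y => cprob p (fun ω' => S ω' = true) (fun ω' => (V ω', U ω') = y)) f hc
    simpa only [indT, one_mul] using H
  -- Step 1: decompose the estimated-nuisance expectation
  have h1 : _root_.expect p (chiFn Y A S V U R r α qh mh gh κh)
      = (∑ ω, p ω * (ind (S ω = false) * (mh (V ω) - (1 - α))))
      + (∑ ω, ind (S ω = true) *
          (p ω * ((1 - κh (V ω)) / κh (V ω) * (qh (V ω, U ω) - mh (V ω)))))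
      + ((∑ ω, ind (A ω = true ∧ S ω = true) *
          (p ω * (ind (R (Y ω) (V ω) ≤ r)
            * ((1 - κh (V ω)) / (gh (V ω, U ω) * κh (V ω))))))
        - (∑ ω, ind (A ω = true ∧ S ω = true) *
          (p ω * (qh (V ω, U ω)
            * ((1 - κh (V ω)) / (gh (V ω, U ω) * κh (V ω))))))) := by
    unfold _root_.expect chiFn
    rw [← Finset.sum_sub_distrib, ← Finset.sum_add_distrib, ← Finset.sum_add_distrib]
    refine Finset.sum_congr rfl fun ω _ => ?_
    cases hA : A ω <;> cases hS : S ω <;>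
      simp [hA, hS, ind_of_true, ind_of_false] <;> ring
  have h2 : (∑ ω, ind (A ω = true ∧ S ω = true) *
          (p ω * (ind (R (Y ω) (V ω) ≤ r)
            * ((1 - κh (V ω)) / (gh (V ω, U ω) * κh (V ω))))))
      = ∑ ω, ind (A ω = true ∧ S ω = true) *
          (p ω * (q (V ω, U ω)
            * ((1 - κh (V ω)) / (gh (V ω, U ω) * κh (V ω))))) :=
    instq (fun x => (1 - κh x.1) / (gh x * κh x.1))
  have h3 : (∑ ω, ind (A ω = true ∧ S ω = true) *
          (p ω * (q (V ω, U ω)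
            * ((1 - κh (V ω)) / (gh (V ω, U ω) * κh (V ω))))))
      - (∑ ω, ind (A ω = true ∧ S ω = true) *
          (p ω * (qh (V ω, U ω)
            * ((1 - κh (V ω)) / (gh (V ω, U ω) * κh (V ω))))))
      = ∑ ω, ind (S ω = true) *
          (p ω * (ind (A ω = true) * ((q (V ω, U ω) - qh (V ω, U ω))
            * ((1 - κh (V ω)) / (gh (V ω, U ω) * κh (V ω)))))) := by
    rw [← Finset.sum_sub_distrib]
    refine Finset.sum_congr rfl fun ω _ => ?_
    cases hA : A ω <;> cases hS : S ω <;>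
      simp [hA, hS, ind_of_true, ind_of_false] <;> ring
  have h4 : (∑ ω, ind (S ω = true) *
          (p ω * (ind (A ω = true) * ((q (V ω, U ω) - qh (V ω, U ω))
            * ((1 - κh (V ω)) / (gh (V ω, U ω) * κh (V ω)))))))
      = ∑ ω, ind (S ω = true) *
          (p ω * (g (V ω, U ω) * ((q (V ω, U ω) - qh (V ω, U ω))
            * ((1 - κh (V ω)) / (gh (V ω, U ω) * κh (V ω)))))) :=
    instg (fun x => (q x - qh x) * ((1 - κh x.1) / (gh x * κh x.1)))
  -- Step 2: the true-nuisance expectation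
  have h5 : _root_.expect p (chiFn Y A S V U R r α q m g κ)
      = (∑ ω, p ω * (ind (S ω = false) * (m (V ω) - (1 - α))))
      + ((∑ ω, ind (S ω = true) *
          (p ω * (q (V ω, U ω) * ((1 - κ (V ω)) / κ (V ω)))))
        - (∑ ω, ind (S ω = true) *
          (p ω * (m (V ω) * ((1 - κ (V ω)) / κ (V ω))))))
      + ((∑ ω, ind (A ω = true ∧ S ω = true) *
          (p ω * (ind (R (Y ω) (V ω) ≤ r)
            * ((1 - κ (V ω)) / (g (V ω, U ω) * κ (V ω))))))
        - (∑ ω, ind (A ω = true ∧ S ω = true) *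
          (p ω * (q (V ω, U ω)
            * ((1 - κ (V ω)) / (g (V ω, U ω) * κ (V ω))))))) := by
    unfold _root_.expect chiFn
    rw [← Finset.sum_sub_distrib, ← Finset.sum_sub_distrib,
      ← Finset.sum_add_distrib, ← Finset.sum_add_distrib]
    refine Finset.sum_congr rfl fun ω _ => ?_
    cases hA : A ω <;> cases hS : S ω <;>
      simp [hA, hS, ind_of_true, ind_of_false] <;> ring
  have h6 : (∑ ω, ind (S ω = true) *
          (p ω * (q (V ω, U ω) * ((1 - κ (V ω)) / κ (V ω)))))
      = ∑ ω, ind (S ω = true) *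
          (p ω * (m (V ω) * ((1 - κ (V ω)) / κ (V ω)))) :=
    instm (fun v => (1 - κ v) / κ v)
  have h7 : (∑ ω, ind (A ω = true ∧ S ω = true) *
          (p ω * (ind (R (Y ω) (V ω) ≤ r)
            * ((1 - κ (V ω)) / (g (V ω, U ω) * κ (V ω))))))
      = ∑ ω, ind (A ω = true ∧ S ω = true) *
          (p ω * (q (V ω, U ω)
            * ((1 - κ (V ω)) / (g (V ω, U ω) * κ (V ω))))) :=
    instq (fun x => (1 - κ x.1) / (g x * κ x.1))
  -- Step 3: the first right-hand-side term
  have h8 : _root_.expect p (fun ω =>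
          cprob p (fun ω' => S ω' = true) (fun ω' => (V ω', U ω') = (V ω, U ω))
            * (1 - κh (V ω)) / (κh (V ω) * gh (V ω, U ω))
            * (qh (V ω, U ω) - q (V ω, U ω)) * (gh (V ω, U ω) - g (V ω, U ω)))
      = ∑ ω, p ω * (cprob p (fun ω' => S ω' = true)
          (fun ω' => (V ω', U ω') = (V ω, U ω))
          * ((1 - κh (V ω)) / (κh (V ω) * gh (V ω, U ω))
            * (qh (V ω, U ω) - q (V ω, U ω)) * (gh (V ω, U ω) - g (V ω, U ω)))) := by
    unfold _root_.expect
    exact Finset.sum_congr rfl fun ω _ => by ring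
  have h9 : (∑ ω, p ω * (ind (S ω = true)
          * ((1 - κh (V ω)) / (κh (V ω) * gh (V ω, U ω))
            * (qh (V ω, U ω) - q (V ω, U ω)) * (gh (V ω, U ω) - g (V ω, U ω)))))
      = ∑ ω, p ω * (cprob p (fun ω' => S ω' = true)
          (fun ω' => (V ω', U ω') = (V ω, U ω))
          * ((1 - κh (V ω)) / (κh (V ω) * gh (V ω, U ω))
            * (qh (V ω, U ω) - q (V ω, U ω)) * (gh (V ω, U ω) - g (V ω, U ω)))) :=
    instπ (fun x => (1 - κh x.1) / (κh x.1 * gh x) * (qh x - q x) * (gh x - g x))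
  -- Step 4: pointwise second-order algebra on the S = true part
  have h11 : (∑ ω, ind (S ω = true) *
          (p ω * ((1 - κh (V ω)) / κh (V ω) * (qh (V ω, U ω) - mh (V ω)))))
      + (∑ ω, ind (S ω = true) *
          (p ω * (g (V ω, U ω) * ((q (V ω, U ω) - qh (V ω, U ω))
            * ((1 - κh (V ω)) / (gh (V ω, U ω) * κh (V ω)))))))
      - (∑ ω, p ω * (ind (S ω = true)
          * ((1 - κh (V ω)) / (κh (V ω) * gh (V ω, U ω))
            * (qh (V ω, U ω) - q (V ω, U ω)) * (gh (V ω, U ω) - g (V ω, U ω)))))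
      = (∑ ω, ind (S ω = true) *
          (p ω * (q (V ω, U ω) * ((1 - κh (V ω)) / κh (V ω)))))
        - (∑ ω, ind (S ω = true) *
          (p ω * (mh (V ω) * ((1 - κh (V ω)) / κh (V ω))))) := by
    rw [← Finset.sum_add_distrib, ← Finset.sum_sub_distrib, ← Finset.sum_sub_distrib]
    refine Finset.sum_congr rfl fun ω _ => ?_
    cases hS : S ω
    · simp [ind, hS]
    · have hg0 := hgh0 (V ω, U ω)
      have hk0 := hκh0 (V ω)
      simp only [ind, hS]
      norm_num
      field_simp
      ring
  have h12 : (∑ ω, ind (S ω = true) *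
          (p ω * (q (V ω, U ω) * ((1 - κh (V ω)) / κh (V ω)))))
      = ∑ ω, ind (S ω = true) *
          (p ω * (m (V ω) * ((1 - κh (V ω)) / κh (V ω)))) :=
    instm (fun v => (1 - κh v) / κh v)
  -- Step 5: aggregate the V-level terms
  have h13 : (∑ ω, p ω * (ind (S ω = false) * (mh (V ω) - (1 - α))))
      - (∑ ω, p ω * (ind (S ω = false) * (m (V ω) - (1 - α))))
      + ((∑ ω, ind (S ω = true) *
          (p ω * (m (V ω) * ((1 - κh (V ω)) / κh (V ω)))))
        - (∑ ω, ind (S ω = true) *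
          (p ω * (mh (V ω) * ((1 - κh (V ω)) / κh (V ω))))))
      = (∑ ω, p ω * (mh (V ω) - m (V ω)))
        + (∑ ω, p ω * (ind (S ω = true)
            * ((1 - κh (V ω)) / κh (V ω) * (m (V ω) - mh (V ω))
              - (mh (V ω) - m (V ω))))) := by
    rw [← Finset.sum_sub_distrib, ← Finset.sum_sub_distrib,
      ← Finset.sum_add_distrib, ← Finset.sum_add_distrib]
    refine Finset.sum_congr rfl fun ω _ => ?_
    cases hS : S ω <;> simp [ind, hS] <;> ring
  have h14 : (∑ ω, p ω * (ind (S ω = true)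
            * ((1 - κh (V ω)) / κh (V ω) * (m (V ω) - mh (V ω))
              - (mh (V ω) - m (V ω)))))
      = ∑ ω, p ω * (κ (V ω)
            * ((1 - κh (V ω)) / κh (V ω) * (m (V ω) - mh (V ω))
              - (mh (V ω) - m (V ω)))) :=
    instκ (fun v => (1 - κh v) / κh v * (m v - mh v) - (mh v - m v))
  have h15 : (∑ ω, p ω * (mh (V ω) - m (V ω)))
      + (∑ ω, p ω * (κ (V ω)
            * ((1 - κh (V ω)) / κh (V ω) * (m (V ω) - mh (V ω))
              - (mh (V ω) - m (V ω)))))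
      = ∑ ω, p ω * ((κh (V ω) - κ (V ω)) / κh (V ω) * (mh (V ω) - m (V ω))) := by
    rw [← Finset.sum_add_distrib]
    refine Finset.sum_congr rfl fun ω _ => ?_
    have hk0 := hκh0 (V ω)
    field_simp
    ring
  have h16 : _root_.expect p (fun ω =>
          (κh (V ω) - κ (V ω)) / κh (V ω) * (mh (V ω) - m (V ω)))
      = ∑ ω, p ω * ((κh (V ω) - κ (V ω)) / κh (V ω) * (mh (V ω) - m (V ω))) := rfl
  linarith [h1, h2, h3, h4, h5, h6, h7, h8, h9, h11, h12, h13, h14, h15, h16]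
end

section
/- Let $(Y,A,X,S)$ be discrete satisfying positivity, unconfoundedness $Y \perp A \mid (X,S=1)$, and source exchangeability $Y \perp S \mid V$ where $X = (V,U)$. Fix $r$ and the true nuisances $q, m, g, \kappa$ as before, and let $\hat q, \hat m, \hat g, \hat \kappa$ be arbitrary functions with $\hat g, \hat\kappa$ valued in $(\varepsilon, 1-\varepsilon)$. If either ($\hat q = q$ and $\hat m = m$) or ($\hat g = g$ and $\hat\kappa = \kappa$), then $E[\chi(O; \hat q, \hat m, \hat g, \hat\kappa)] = E[\chi(O; q, m, g, \kappa)]$, where $\chi(O;\cdot)$ is the influence-curve expression with the given nuisances plugged in. -/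
open scoped Classical
open Finset

/-! `χ` is a plug-in term plus two correction terms. When `q̂ = q` and `m̂ = m`, each correction
term is a residual `f - E[f | X, B]` on `B` times a function of `X`, so it has mean zero whatever
`ĝ, κ̂` are, and `E[χ] = E[(1 - S)(m(V) - (1 - α))]`. When `ĝ = g` and `κ̂ = κ`, regroup `χ` as an
inverse-probability-weighted term free of `q̂, m̂` plus `m̂(V)(1 - S/κ(V))` and
`S(1 - κ(V))/κ(V) · q̂(X)(1 - A/g(X))`; weighting by the inverse of a true conditional probability
turns `1 - E/e(X)` into a residual again, so both terms have mean zero. -/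

section Expect

variable {Ω : Type*} [Fintype Ω] (p : Ω → ℝ)

lemma ind_and (P Q : Prop) : ind (P ∧ Q) = ind P * ind Q := by
  by_cases hP : P <;> by_cases hQ : Q <;> simp [ind, hP, hQ]

lemma ind_eq_false (b : Bool) : ind (b = false) = 1 - ind (b = true) := by
  cases b <;> simp [ind]

lemma expect_add (f g : Ω → ℝ) :
    expect p (fun ω => f ω + g ω) = expect p f + expect p g := by
  simp only [_root_.expect, mul_add, sum_add_distrib]

lemma expect_congr {f g : Ω → ℝ} (h : ∀ ω, p ω ≠ 0 → f ω = g ω) :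
    expect p f = expect p g := by
  refine sum_congr rfl fun ω _ => ?_
  by_cases hω : p ω = 0
  · simp [hω]
  · rw [h ω hω]

lemma prob_pos_of_ne_zero (hp : ∀ ω, 0 ≤ p ω) {E : Ω → Prop} {ω : Ω} (hE : E ω)
    (hω : p ω ≠ 0) : 0 < prob p E := by
  have hle : (if E ω then p ω else 0) ≤ prob p E :=
    single_le_sum (f := fun ω => if E ω then p ω else 0)
      (fun ω _ => by split_ifs <;> simp [hp ω]) (mem_univ ω)
  rw [if_pos hE] at hle
  exact (lt_of_le_of_ne (hp ω) (Ne.symm hω)).trans_le hle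

lemma cexpect_mul_prob (hp : ∀ ω, 0 ≤ p ω) (f : Ω → ℝ) (B : Ω → Prop) :
    cexpect p f B * prob p B = ∑ ω, if B ω then p ω * f ω else 0 := by
  by_cases hB : prob p B = 0
  -- a null event carries no mass, so the junk value `x / 0 = 0` of `cexpect` is harmless
  · refine (mul_eq_zero_of_right _ hB).trans (sum_eq_zero fun ω _ => ?_).symm
    split_ifs with hω
    · by_contra hne
      exact (prob_pos_of_ne_zero p hp hω (left_ne_zero_of_mul hne)).ne' hB
    · rfl
  · exact div_mul_cancel₀ _ hB

lemma cprob_eq_cexpect_ind (E B : Ω → Prop) :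
    cprob p E B = cexpect p (fun ω => ind (E ω)) B := by
  unfold cprob cexpect prob
  congr 1
  refine sum_congr rfl fun ω _ => ?_
  by_cases hE : E ω <;> by_cases hB : B ω <;> simp [ind, hE, hB]

variable {𝓧 : Type*}

theorem expect_ind_mul_sub_cexpect_eq_zero (hp : ∀ ω, 0 ≤ p ω) (X : Ω → 𝓧) (B : Ω → Prop)
    (f : Ω → ℝ) {c : 𝓧 → ℝ} (hc : ∀ x, c x = cexpect p f (fun ω => X ω = x ∧ B ω))
    (h : 𝓧 → ℝ) :
    expect p (fun ω => ind (B ω) * h (X ω) * (f ω - c (X ω))) = 0 := by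
  unfold _root_.expect
  rw [← sum_fiberwise_of_maps_to (g := X) (t := univ.image X)
    fun ω _ => mem_image_of_mem X (mem_univ ω)]
  refine sum_eq_zero fun x _ => ?_
  have hfiber : ∑ ω ∈ univ.filter (X · = x), p ω * (ind (B ω) * h (X ω) * (f ω - c (X ω)))
      = h x * (cexpect p f (fun ω => X ω = x ∧ B ω) * prob p (fun ω => X ω = x ∧ B ω)
        - c x * prob p (fun ω => X ω = x ∧ B ω)) := by
    rw [cexpect_mul_prob p hp]
    simp only [prob, sum_filter, mul_sum, ← sum_sub_distrib]
    refine sum_congr rfl fun ω _ => ?_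
    by_cases hX : X ω = x <;> by_cases hB : B ω <;> simp [hX, hB, ind]; ring
  rw [hfiber, hc, sub_self, mul_zero]

theorem expect_ind_mul_one_sub_div_cprob_eq_zero (hp : ∀ ω, 0 ≤ p ω) (X : Ω → 𝓧)
    (B E : Ω → Prop) {e : 𝓧 → ℝ} (he : ∀ x, e x = cprob p E (fun ω => X ω = x ∧ B ω))
    (he_ne : ∀ x, 0 < prob p (fun ω => X ω = x ∧ B ω) → e x ≠ 0) (h : 𝓧 → ℝ) :
    expect p (fun ω => ind (B ω) * h (X ω) * (1 - ind (E ω) / e (X ω))) = 0 := by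
  have hresidual := expect_ind_mul_sub_cexpect_eq_zero p hp X B (fun ω => ind (E ω))
    (fun x => (he x).trans (cprob_eq_cexpect_ind p _ _)) (fun x => -h x / e x)
  rw [← hresidual]
  refine expect_congr p fun ω hω => ?_
  by_cases hB : B ω
  · have hne := he_ne (X ω) (prob_pos_of_ne_zero p hp (E := fun ω' => X ω' = X ω ∧ B ω')
      ⟨rfl, hB⟩ hω)
    field_simp
    ring
  · simp [ind, hB]

end Expect

section InfluenceCurve

variable {Ω 𝓨 𝓥 𝓤 : Type*} [Fintype Ω] (p : Ω → ℝ) (hp : ∀ ω, 0 ≤ p ω)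
  (Y : Ω → 𝓨) (A S : Ω → Bool) (V : Ω → 𝓥) (U : Ω → 𝓤) (R : 𝓨 → 𝓥 → ℝ) (r α : ℝ)
include hp

theorem expect_chiFn_of_true_outcome {q : 𝓥 × 𝓤 → ℝ} {m : 𝓥 → ℝ}
    (hq : ∀ x, q x = cprob p (fun ω => R (Y ω) (V ω) ≤ r)
      (fun ω => (V ω, U ω) = x ∧ A ω = true ∧ S ω = true))
    (hm : ∀ v, m v = cexpect p (fun ω => q (V ω, U ω)) (fun ω => V ω = v ∧ S ω = true))
    (g : 𝓥 × 𝓤 → ℝ) (κ : 𝓥 → ℝ) :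
    expect p (chiFn Y A S V U R r α q m g κ)
      = expect p (fun ω => ind (S ω = false) * (m (V ω) - (1 - α))) := by
  have hm_residual := expect_ind_mul_sub_cexpect_eq_zero p hp V (fun ω => S ω = true)
    (fun ω => q (V ω, U ω)) hm (fun v => (1 - κ v) / κ v)
  have hq_residual := expect_ind_mul_sub_cexpect_eq_zero p hp (fun ω => (V ω, U ω))
    (fun ω => A ω = true ∧ S ω = true) (fun ω => ind (R (Y ω) (V ω) ≤ r))
    (fun x => (hq x).trans (cprob_eq_cexpect_ind p _ _)) (fun x => (1 - κ x.1) / (g x * κ x.1))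
  have hsplit : chiFn Y A S V U R r α q m g κ = fun ω =>
      ind (S ω = false) * (m (V ω) - (1 - α))
      + (ind (S ω = true) * ((1 - κ (V ω)) / κ (V ω)) * (q (V ω, U ω) - m (V ω))
        + ind (A ω = true ∧ S ω = true) * ((1 - κ (V ω)) / (g (V ω, U ω) * κ (V ω)))
          * (ind (R (Y ω) (V ω) ≤ r) - q (V ω, U ω))) := by
    funext ω
    simp only [chiFn, ind_and]
    ring
  rw [hsplit, expect_add, expect_add, hm_residual, hq_residual, add_zero, add_zero]

theorem expect_chiFn_of_true_propensity {g : 𝓥 × 𝓤 → ℝ} {κ : 𝓥 → ℝ}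
    (hg : ∀ x, g x = cprob p (fun ω => A ω = true) (fun ω => (V ω, U ω) = x ∧ S ω = true))
    (hκ : ∀ v, κ v = cprob p (fun ω => S ω = true) (fun ω => V ω = v))
    (hg_ne : ∀ x, 0 < prob p (fun ω => (V ω, U ω) = x ∧ S ω = true) → g x ≠ 0)
    (hκ_ne : ∀ v, 0 < prob p (fun ω => V ω = v) → κ v ≠ 0)
    (q : 𝓥 × 𝓤 → ℝ) (m : 𝓥 → ℝ) :
    expect p (chiFn Y A S V U R r α q m g κ)
      = expect p (fun ω => -(ind (S ω = false) * (1 - α))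
          + ind (A ω = true) * ind (S ω = true) * (1 - κ (V ω)) / (g (V ω, U ω) * κ (V ω))
            * ind (R (Y ω) (V ω) ≤ r)) := by
  have hκ_balance := expect_ind_mul_one_sub_div_cprob_eq_zero p hp V (fun _ => True)
    (fun ω => S ω = true) (fun v => by simpa only [and_true] using hκ v)
    (fun v hv => hκ_ne v (by simpa only [and_true] using hv)) m
  have hg_balance := expect_ind_mul_one_sub_div_cprob_eq_zero p hp (fun ω => (V ω, U ω))
    (fun ω => S ω = true) (fun ω => A ω = true) hg hg_ne
    (fun x => (1 - κ x.1) / κ x.1 * q x)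
  have hsplit : expect p (chiFn Y A S V U R r α q m g κ) = expect p (fun ω =>
      (-(ind (S ω = false) * (1 - α))
        + ind (A ω = true) * ind (S ω = true) * (1 - κ (V ω)) / (g (V ω, U ω) * κ (V ω))
          * ind (R (Y ω) (V ω) ≤ r))
      + (ind True * m (V ω) * (1 - ind (S ω = true) / κ (V ω))
        + ind (S ω = true) * ((1 - κ (V ω)) / κ (V ω) * q (V ω, U ω))
          * (1 - ind (A ω = true) / g (V ω, U ω)))) := by
    refine expect_congr p fun ω hω => ?_
    have hκne : κ (V ω) ≠ 0 :=
      hκ_ne _ (prob_pos_of_ne_zero p hp (E := fun ω' => V ω' = V ω) rfl hω)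
    simp only [chiFn, ind_eq_false, show ind True = 1 from if_pos trivial]
    field_simp
    ring
  rw [hsplit, expect_add, add_eq_left, expect_add, hκ_balance, hg_balance, add_zero]

end InfluenceCurve

theorem stmt15_general {Ω 𝓨 𝓥 𝓤 : Type*} [Fintype Ω]
    (p : Ω → ℝ) (hp : ∀ ω, 0 ≤ p ω)
    (Y : Ω → 𝓨) (A S : Ω → Bool) (V : Ω → 𝓥) (U : Ω → 𝓤)
    (R : 𝓨 → 𝓥 → ℝ) (r α : ℝ)
    (g : 𝓥 × 𝓤 → ℝ) (κ : 𝓥 → ℝ) (q : 𝓥 × 𝓤 → ℝ) (m : 𝓥 → ℝ)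
    (hg : ∀ x, g x = cprob p (fun ω => A ω = true) (fun ω => (V ω, U ω) = x ∧ S ω = true))
    (hκ : ∀ v, κ v = cprob p (fun ω => S ω = true) (fun ω => V ω = v))
    (hq : ∀ x, q x = cprob p (fun ω => R (Y ω) (V ω) ≤ r)
      (fun ω => (V ω, U ω) = x ∧ A ω = true ∧ S ω = true))
    (hm : ∀ v, m v = cexpect p (fun ω => q (V ω, U ω)) (fun ω => V ω = v ∧ S ω = true))
    (hgpos : ∀ x, 0 < prob p (fun ω => (V ω, U ω) = x ∧ S ω = true) → 0 < g x ∧ g x < 1)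
    (hκpos : ∀ v, 0 < prob p (fun ω => V ω = v) → 0 < κ v ∧ κ v < 1)
    (qh : 𝓥 × 𝓤 → ℝ) (mh : 𝓥 → ℝ) (gh : 𝓥 × 𝓤 → ℝ) (κh : 𝓥 → ℝ)
    (hdr : (qh = q ∧ mh = m) ∨ (gh = g ∧ κh = κ)) :
    expect p (chiFn Y A S V U R r α qh mh gh κh)
      = expect p (chiFn Y A S V U R r α q m g κ) := by
  have hg_ne x hx : g x ≠ 0 := (hgpos x hx).1.ne'
  have hκ_ne v hv : κ v ≠ 0 := (hκpos v hv).1.ne'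
  rcases hdr with ⟨rfl, rfl⟩ | ⟨rfl, rfl⟩
  · rw [expect_chiFn_of_true_outcome p hp Y A S V U R r α hq hm,
      expect_chiFn_of_true_outcome p hp Y A S V U R r α hq hm]
  · rw [expect_chiFn_of_true_propensity p hp Y A S V U R r α hg hκ hg_ne hκ_ne,
      expect_chiFn_of_true_propensity p hp Y A S V U R r α hg hκ hg_ne hκ_ne]

/-- double robustness of the influence-curve expectation. -/
theorem stmt15 {Ω 𝓨 𝓥 𝓤 : Type*} [Fintype Ω]
    (p : Ω → ℝ) (hp : ∀ ω, 0 ≤ p ω) (hsum : ∑ ω, p ω = 1)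
    (Y : Ω → 𝓨) (A S : Ω → Bool) (V : Ω → 𝓥) (U : Ω → 𝓤)
    (R : 𝓨 → 𝓥 → ℝ) (r α : ℝ)
    (g : 𝓥 × 𝓤 → ℝ) (κ : 𝓥 → ℝ) (q : 𝓥 × 𝓤 → ℝ) (m : 𝓥 → ℝ)
    (hg : ∀ x, g x = cprob p (fun ω => A ω = true) (fun ω => (V ω, U ω) = x ∧ S ω = true))
    (hκ : ∀ v, κ v = cprob p (fun ω => S ω = true) (fun ω => V ω = v))
    (hq : ∀ x, q x = cprob p (fun ω => R (Y ω) (V ω) ≤ r)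
      (fun ω => (V ω, U ω) = x ∧ A ω = true ∧ S ω = true))
    (hm : ∀ v, m v = cexpect p (fun ω => q (V ω, U ω)) (fun ω => V ω = v ∧ S ω = true))
    (hgpos : ∀ x, 0 < prob p (fun ω => (V ω, U ω) = x ∧ S ω = true) → 0 < g x ∧ g x < 1)
    (hκpos : ∀ v, 0 < prob p (fun ω => V ω = v) → 0 < κ v ∧ κ v < 1)
    (hπpos : ∀ x, 0 < prob p (fun ω => (V ω, U ω) = x) →
      0 < cprob p (fun ω => S ω = true) (fun ω => (V ω, U ω) = x))
    (hS0 : 0 < prob p (fun ω => S ω = false))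
    (hunconf : CondIndepOn p Y A (fun ω => (V ω, U ω)) (fun ω => S ω = true))
    (hexch : CondIndep p Y S V)
    (qh : 𝓥 × 𝓤 → ℝ) (mh : 𝓥 → ℝ) (gh : 𝓥 × 𝓤 → ℝ) (κh : 𝓥 → ℝ)
    (ε : ℝ) (hε : 0 < ε)
    (hgh : ∀ x, gh x ∈ Set.Ioo ε (1 - ε)) (hκh : ∀ v, κh v ∈ Set.Ioo ε (1 - ε))
    (hdr : (qh = q ∧ mh = m) ∨ (gh = g ∧ κh = κ)) :
    expect p (chiFn Y A S V U R r α qh mh gh κh)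
      = expect p (chiFn Y A S V U R r α q m g κ) :=
  stmt15_general p hp Y A S V U R r α g κ q m hg hκ hq hm hgpos hκpos qh mh gh κh hdr
end
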